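/- Let F : ℝ^d → ℝ be differentiable with L-Lipschitz gradient and μ-strongly convex in the sense that ‖∇F(x)‖² ≥ 2μ·(F(x) − F(x*)) for all x ∈ ℝ^d, where x* is a minimizer of F and 0 < μ ≤ L. Fix ν > 0 and θ > 0. Let (Ω, 𝓐, P) be a probability space with a filtration (𝓕_k)_{k≥0}, and let (x_k)_{k≥0} and (G_k)_{k≥0} be random sequences in ℝ^d such that x_k is 𝓕_k-measurable, F(x_k), ‖∇F(x_k)‖² and ‖G_k‖² are integrable, x_{k+1} = x_k − α·G_k with the fixed step size α = 1/(4(1 + θ²)L), and for every k, E[G_k | 𝓕_k] = ∇^{FD}F(x_k) and E[‖G_k − ∇^{FD}F(x_k)‖² | 𝓕_k] ≤ θ²·‖∇^{FD}F(x_k)‖² almost surely. Then for every k ≥ 0, E[F(x_k) − F(x*)] ≤ (1 − Ω₃)^k · ( E[F(x_0)] − F(x*) − Ω₄ ) + Ω₄, where Ω₃ := μ/(8(1 + θ²)L) and Ω₄ := 3·L²·ν²·d/(8μ). -/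

import Mathlib

/-!
The forward difference `(F (x + ν eⱼ) - F x) / ν` differs from `∂ⱼ F x` by at most `L ν / 2`
(descent lemma), so the estimator `g = ∇^{FD} F` has bias `‖g - ∇F‖² ≤ δ := d L² ν² / 4`.
Conditioning on `𝓕ₖ` gives `E⟪∇F(xₖ), Gₖ⟫ = E⟪∇F(xₖ), g(xₖ)⟫` and
`E‖Gₖ‖² ≤ (1 + θ²) E‖g(xₖ)‖²`. Inserting these into the descent lemma along the step, the identity
`2⟪∇F, g⟫ - ‖g‖² = ‖∇F‖² - ‖g - ∇F‖²` and the PL inequality give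
`E[F(xₖ₊₁) - F*] ≤ (1 - αμ) E[F(xₖ) - F*] + αδ/2`. Loosened to the stated constants, this
recursion unrolls to the geometric bound.
-/

open MeasureTheory InnerProductSpace

/-- The forward finite-difference gradient estimator
`∇^{FD}F(x) := ∑ⱼ ((F(x + ν eⱼ) − F(x))/ν) eⱼ`. -/
noncomputable def fdGrad {d : ℕ} (F : EuclideanSpace ℝ (Fin d) → ℝ) (ν : ℝ)
    (x : EuclideanSpace ℝ (Fin d)) : EuclideanSpace ℝ (Fin d) :=
  ∑ j, ((F (x + ν • EuclideanSpace.single j (1 : ℝ)) - F x) / ν) •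
    EuclideanSpace.single j (1 : ℝ)

theorem le_pow_mul_sub_add_of_le_mul_add {e : ℕ → ℝ} {q c : ℝ} (hq : q ≤ 1)
    (h : ∀ k, e (k + 1) ≤ (1 - q) * e k + q * c) (k : ℕ) :
    e k ≤ (1 - q) ^ k * (e 0 - c) + c := by
  induction k with
  | zero => simp
  | succ k ih =>
    calc e (k + 1) ≤ (1 - q) * e k + q * c := h k
      _ ≤ (1 - q) * ((1 - q) ^ k * (e 0 - c) + c) + q * c := by gcongr
      _ = (1 - q) ^ (k + 1) * (e 0 - c) + c := by ring

section LipschitzGradient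

variable {E : Type*} [NormedAddCommGroup E] [InnerProductSpace ℝ E] [CompleteSpace E]
  {F : E → ℝ} {L : ℝ}

theorem continuous_gradient_of_lipschitz
    (hLip : ∀ x y, ‖gradient F x - gradient F y‖ ≤ L * ‖x - y‖) : Continuous (gradient F) :=
  (LipschitzWith.of_dist_le' fun x y => by simpa only [dist_eq_norm] using hLip x y).continuous

theorem abs_sub_sub_inner_gradient_le (hF : Differentiable ℝ F)
    (hLip : ∀ x y, ‖gradient F x - gradient F y‖ ≤ L * ‖x - y‖) (x v : E) :
    |F (x + v) - F x - ⟪gradient F x, v⟫_ℝ| ≤ L / 2 * ‖v‖ ^ 2 := by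
  have hf : ∀ t : ℝ, HasDerivAt (fun t => F (x + t • v) - F x - t * ⟪gradient F x, v⟫_ℝ)
      (⟪gradient F (x + t • v), v⟫_ℝ - ⟪gradient F x, v⟫_ℝ) t := by
    intro t
    have hline : HasDerivAt (fun s : ℝ => x + s • v) v t := by
      simpa using ((hasDerivAt_id t).smul_const v).const_add x
    have := (hF _).hasGradientAt.hasFDerivAt.comp_hasDerivAt t hline
    exact ((this.sub_const (F x)).sub ((hasDerivAt_id t).mul_const _)).congr_deriv (by simp)
  have hB : ∀ t : ℝ, HasDerivAt (fun t => L / 2 * t ^ 2 * ‖v‖ ^ 2) (L * t * ‖v‖ ^ 2) t :=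
    fun t => (((hasDerivAt_pow 2 t).const_mul (L / 2)).mul_const (‖v‖ ^ 2)).congr_deriv
      (by push_cast; ring)
  have bound : ∀ t ∈ Set.Ico (0 : ℝ) 1,
      ‖⟪gradient F (x + t • v), v⟫_ℝ - ⟪gradient F x, v⟫_ℝ‖ ≤ L * t * ‖v‖ ^ 2 := by
    rintro t ⟨ht, -⟩
    calc ‖⟪gradient F (x + t • v), v⟫_ℝ - ⟪gradient F x, v⟫_ℝ‖
        = |⟪gradient F (x + t • v) - gradient F x, v⟫_ℝ| := by
          rw [inner_sub_left, Real.norm_eq_abs]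
      _ ≤ ‖gradient F (x + t • v) - gradient F x‖ * ‖v‖ := abs_real_inner_le_norm _ _
      _ ≤ L * ‖x + t • v - x‖ * ‖v‖ := by gcongr; exact hLip _ _
      _ = L * t * ‖v‖ ^ 2 := by
        rw [add_sub_cancel_left, norm_smul, Real.norm_of_nonneg ht]; ring
  simpa using image_norm_le_of_norm_deriv_right_le_deriv_boundary
    (fun t _ => (hf t).continuousAt.continuousWithinAt) (fun t _ => (hf t).hasDerivWithinAt)
    (by simp) hB bound (Set.right_mem_Icc.mpr zero_le_one)

theorem le_sub_inner_gradient_add_of_lipschitz (hF : Differentiable ℝ F)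
    (hLip : ∀ x y, ‖gradient F x - gradient F y‖ ≤ L * ‖x - y‖) (x G : E) (α : ℝ) :
    F (x - α • G) ≤ F x - α * ⟪gradient F x, G⟫_ℝ + L / 2 * α ^ 2 * ‖G‖ ^ 2 := by
  have h := abs_sub_sub_inner_gradient_le hF hLip x (-(α • G))
  rw [← sub_eq_add_neg, inner_neg_right, real_inner_smul_right, norm_neg, norm_smul, mul_pow,
    Real.norm_eq_abs, sq_abs] at h
  linarith [le_abs_self (F (x - α • G) - F x - -(α * ⟪gradient F x, G⟫_ℝ))]

end LipschitzGradient

section FiniteDifference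

variable {d : ℕ} {F : EuclideanSpace ℝ (Fin d) → ℝ} {L ν : ℝ}

theorem fdGrad_apply (F : EuclideanSpace ℝ (Fin d) → ℝ) (ν : ℝ) (x : EuclideanSpace ℝ (Fin d))
    (i : Fin d) :
    fdGrad F ν x i = (F (x + ν • EuclideanSpace.single i 1) - F x) / ν := by
  simp [fdGrad, Pi.single_apply]

theorem continuous_fdGrad (hF : Continuous F) (ν : ℝ) : Continuous (fdGrad F ν) :=
  continuous_finsetSum _ fun _ _ =>
    (((hF.comp (continuous_id.add continuous_const)).sub hF).div_const ν).smul continuous_const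

theorem abs_fdGrad_apply_sub_gradient_apply_le (hF : Differentiable ℝ F)
    (hLip : ∀ x y, ‖gradient F x - gradient F y‖ ≤ L * ‖x - y‖) (hν : ν ≠ 0)
    (x : EuclideanSpace ℝ (Fin d)) (i : Fin d) :
    |fdGrad F ν x i - gradient F x i| ≤ L * |ν| / 2 := by
  have htaylor := abs_sub_sub_inner_gradient_le hF hLip x (ν • EuclideanSpace.single i 1)
  have hinner : ⟪gradient F x, ν • EuclideanSpace.single i 1⟫_ℝ = ν * gradient F x i := by
    rw [real_inner_smul_right, EuclideanSpace.inner_single_right]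
    simp
  have hnorm : ‖ν • EuclideanSpace.single i (1 : ℝ)‖ = |ν| := by simp [norm_smul]
  rw [hinner, hnorm] at htaylor
  have hdiff : fdGrad F ν x i - gradient F x i
      = (F (x + ν • EuclideanSpace.single i 1) - F x - ν * gradient F x i) / ν := by
    rw [fdGrad_apply]; field_simp
  rw [hdiff, abs_div, div_le_iff₀ (abs_pos.mpr hν)]
  linarith [sq_abs ν]

theorem norm_fdGrad_sub_gradient_sq_le (hF : Differentiable ℝ F)
    (hLip : ∀ x y, ‖gradient F x - gradient F y‖ ≤ L * ‖x - y‖) (hν : ν ≠ 0)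
    (x : EuclideanSpace ℝ (Fin d)) :
    ‖fdGrad F ν x - gradient F x‖ ^ 2 ≤ d * (L * ν / 2) ^ 2 := by
  rw [EuclideanSpace.norm_sq_eq]
  calc ∑ i, ‖(fdGrad F ν x - gradient F x) i‖ ^ 2 ≤ ∑ _i : Fin d, (L * |ν| / 2) ^ 2 := by
        refine Finset.sum_le_sum fun i _ => pow_le_pow_left₀ (norm_nonneg _) ?_ 2
        simpa using abs_fdGrad_apply_sub_gradient_apply_le hF hLip hν x i
    _ = d * (L * ν / 2) ^ 2 := by
        simp only [Finset.sum_const, Finset.card_univ, Fintype.card_fin, nsmul_eq_mul, mul_pow,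
          div_pow, sq_abs]

end FiniteDifference

section ConditionalMoments

variable {Ω E : Type*} {m m0 : MeasurableSpace Ω} {μ : Measure Ω}
  [NormedAddCommGroup E] [InnerProductSpace ℝ E]

theorem MeasureTheory.MemLp.integrable_inner {f g : Ω → E} (hf : MemLp f 2 μ)
    (hg : MemLp g 2 μ) : Integrable (fun ω => ⟪f ω, g ω⟫_ℝ) μ :=
  memLp_one_iff_integrable.1 ((innerSL ℝ).memLp_of_bilin 1 hf hg)

variable [IsFiniteMeasure μ] [CompleteSpace E]

theorem integral_inner_eq_of_condExp_ae_eq (hm : m ≤ m0) {f G g : Ω → E}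
    (hf : StronglyMeasurable[m] f) (hf2 : MemLp f 2 μ) (hG : MemLp G 2 μ)
    (hmean : μ[G|m] =ᵐ[μ] g) :
    ∫ ω, ⟪f ω, G ω⟫_ℝ ∂μ = ∫ ω, ⟪f ω, g ω⟫_ℝ ∂μ := by
  rw [← integral_condExp hm]
  refine integral_congr_ae ?_
  filter_upwards [condExp_bilin_of_stronglyMeasurable_left (innerSL ℝ) hf
    (hf2.integrable_inner hG) (hG.integrable one_le_two), hmean] with ω hpull hω
  rw [← hω]
  exact hpull

theorem integral_norm_sq_eq_integral_norm_sub_sq_add (hm : m ≤ m0) {G g : Ω → E}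
    (hg : StronglyMeasurable[m] g) (hg2 : MemLp g 2 μ) (hG : MemLp G 2 μ)
    (hmean : μ[G|m] =ᵐ[μ] g) :
    ∫ ω, ‖G ω‖ ^ 2 ∂μ = ∫ ω, ‖G ω - g ω‖ ^ 2 ∂μ + ∫ ω, ‖g ω‖ ^ 2 ∂μ := by
  have hcross := integral_inner_eq_of_condExp_ae_eq hm hg hg2 hG hmean
  simp only [real_inner_self_eq_norm_sq] at hcross
  have hexpand : ∀ ω, ‖G ω - g ω‖ ^ 2 = ‖G ω‖ ^ 2 - 2 * ⟪g ω, G ω⟫_ℝ + ‖g ω‖ ^ 2 := fun ω => by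
    rw [norm_sub_sq_real, real_inner_comm]
  have hcross_int : Integrable (fun ω => 2 * ⟪g ω, G ω⟫_ℝ) μ :=
    (hg2.integrable_inner hG).const_mul 2
  have hfirst_int : Integrable (fun ω => ‖G ω‖ ^ 2 - 2 * ⟪g ω, G ω⟫_ℝ) μ :=
    (hG.integrable_norm_pow two_ne_zero).sub hcross_int
  simp_rw [hexpand]
  rw [integral_add hfirst_int (hg2.integrable_norm_pow two_ne_zero),
    integral_sub (hG.integrable_norm_pow two_ne_zero) hcross_int, integral_const_mul, hcross]
  ring

theorem integral_norm_sq_le_of_condExp_norm_sub_sq_le (hm : m ≤ m0) {G g : Ω → E} {θ : ℝ}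
    (hg : StronglyMeasurable[m] g) (hg2 : MemLp g 2 μ) (hG : MemLp G 2 μ)
    (hmean : μ[G|m] =ᵐ[μ] g)
    (hvar : μ[fun ω => ‖G ω - g ω‖ ^ 2|m] ≤ᵐ[μ] fun ω => θ ^ 2 * ‖g ω‖ ^ 2) :
    ∫ ω, ‖G ω‖ ^ 2 ∂μ ≤ (1 + θ ^ 2) * ∫ ω, ‖g ω‖ ^ 2 ∂μ := by
  have hvar_int : ∫ ω, ‖G ω - g ω‖ ^ 2 ∂μ ≤ θ ^ 2 * ∫ ω, ‖g ω‖ ^ 2 ∂μ := by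
    rw [← integral_condExp hm, ← integral_const_mul]
    exact integral_mono_ae integrable_condExp
      ((hg2.integrable_norm_pow two_ne_zero).const_mul _) hvar
  rw [integral_norm_sq_eq_integral_norm_sub_sq_add hm hg hg2 hG hmean]
  linarith

end ConditionalMoments

section BiasedStep

variable {Ω E : Type*} {m m0 : MeasurableSpace Ω} {P : Measure Ω}
  [NormedAddCommGroup E] [InnerProductSpace ℝ E] [CompleteSpace E] {F : E → ℝ} {L : ℝ}

theorem integral_comp_sub_smul_le (hF : Differentiable ℝ F)
    (hLip : ∀ x y, ‖gradient F x - gradient F y‖ ≤ L * ‖x - y‖) {X G : Ω → E} {α : ℝ}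
    (hFX : Integrable (fun ω => F (X ω)) P) (hFY : Integrable (fun ω => F (X ω - α • G ω)) P)
    (hgrad : MemLp (fun ω => gradient F (X ω)) 2 P) (hG : MemLp G 2 P) :
    ∫ ω, F (X ω - α • G ω) ∂P ≤ ∫ ω, F (X ω) ∂P - α * ∫ ω, ⟪gradient F (X ω), G ω⟫_ℝ ∂P
      + L / 2 * α ^ 2 * ∫ ω, ‖G ω‖ ^ 2 ∂P := by
  have hinner := (hgrad.integrable_inner hG).const_mul α
  have hnorm := (hG.integrable_norm_pow two_ne_zero).const_mul (L / 2 * α ^ 2)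
  have hlin : Integrable (fun ω => F (X ω) - α * ⟪gradient F (X ω), G ω⟫_ℝ) P := hFX.sub hinner
  rw [← integral_const_mul, ← integral_const_mul, ← integral_sub hFX hinner,
    ← integral_add hlin hnorm]
  exact integral_mono hFY (hlin.add hnorm) fun ω =>
    le_sub_inner_gradient_add_of_lipschitz hF hLip (X ω) (G ω) α

theorem integral_comp_sub_smul_le_of_condExp [IsFiniteMeasure P] (hm : m ≤ m0) (hF : Differentiable ℝ F)
    (hLip : ∀ x y, ‖gradient F x - gradient F y‖ ≤ L * ‖x - y‖) (hL : 0 ≤ L) {θ α : ℝ}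
    {X G g : Ω → E} (hX : StronglyMeasurable[m] X) (hg : StronglyMeasurable[m] g)
    (hFX : Integrable (fun ω => F (X ω)) P) (hFY : Integrable (fun ω => F (X ω - α • G ω)) P)
    (hgrad : MemLp (fun ω => gradient F (X ω)) 2 P) (hg2 : MemLp g 2 P) (hG : MemLp G 2 P)
    (hmean : P[G|m] =ᵐ[P] g)
    (hvar : P[fun ω => ‖G ω - g ω‖ ^ 2|m] ≤ᵐ[P] fun ω => θ ^ 2 * ‖g ω‖ ^ 2)
    (hα : 0 ≤ α) (hαL : α * L * (1 + θ ^ 2) ≤ 1) :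
    ∫ ω, F (X ω - α • G ω) ∂P
      ≤ ∫ ω, (F (X ω) - α * ⟪gradient F (X ω), g ω⟫_ℝ + α / 2 * ‖g ω‖ ^ 2) ∂P := by
  have hdescent := integral_comp_sub_smul_le hF hLip hFX hFY hgrad hG
  rw [integral_inner_eq_of_condExp_ae_eq hm
    ((continuous_gradient_of_lipschitz hLip).comp_stronglyMeasurable hX) hgrad hG hmean]
    at hdescent
  have hsecond := integral_norm_sq_le_of_condExp_norm_sub_sq_le hm hg hg2 hG hmean hvar
  have hinner := (hgrad.integrable_inner hg2).const_mul α
  have hnorm := hg2.integrable_norm_pow two_ne_zero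
  have hlin : Integrable (fun ω => F (X ω) - α * ⟪gradient F (X ω), g ω⟫_ℝ) P := hFX.sub hinner
  rw [integral_add hlin (hnorm.const_mul _), integral_sub hFX hinner, integral_const_mul,
    integral_const_mul]
  have hnn : 0 ≤ ∫ ω, ‖g ω‖ ^ 2 ∂P := integral_nonneg fun ω => by positivity
  nlinarith [mul_le_mul_of_nonneg_left hsecond (by positivity : 0 ≤ L / 2 * α ^ 2),
    mul_le_mul_of_nonneg_left (mul_le_mul_of_nonneg_right hαL hnn) hα]

theorem integral_sub_le_of_biased_gradient_step [IsProbabilityMeasure P] (hm : m ≤ m0)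
    (hF : Differentiable ℝ F) (hLip : ∀ x y, ‖gradient F x - gradient F y‖ ≤ L * ‖x - y‖)
    (hL : 0 ≤ L) {μ θ α δ : ℝ} {xstar : E}
    (hsc : ∀ y, 2 * μ * (F y - F xstar) ≤ ‖gradient F y‖ ^ 2)
    {g : E → E} (hg : Continuous g) (hbias : ∀ y, ‖g y - gradient F y‖ ^ 2 ≤ δ)
    {X G : Ω → E} (hX : StronglyMeasurable[m] X)
    (hFX : Integrable (fun ω => F (X ω)) P) (hFY : Integrable (fun ω => F (X ω - α • G ω)) P)
    (hgrad : Integrable (fun ω => ‖gradient F (X ω)‖ ^ 2) P) (hG : MemLp G 2 P)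
    (hmean : P[G|m] =ᵐ[P] fun ω => g (X ω))
    (hvar : P[fun ω => ‖G ω - g (X ω)‖ ^ 2|m] ≤ᵐ[P] fun ω => θ ^ 2 * ‖g (X ω)‖ ^ 2)
    (hα : 0 ≤ α) (hαL : α * L * (1 + θ ^ 2) ≤ 1) :
    ∫ ω, F (X ω - α • G ω) ∂P - F xstar
      ≤ (1 - α * μ) * (∫ ω, F (X ω) ∂P - F xstar) + α / 2 * δ := by
  have hv_meas : StronglyMeasurable[m] fun ω => gradient F (X ω) :=
    (continuous_gradient_of_lipschitz hLip).comp_stronglyMeasurable hX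
  have hgX_meas : StronglyMeasurable[m] fun ω => g (X ω) := hg.comp_stronglyMeasurable hX
  have hv : MemLp (fun ω => gradient F (X ω)) 2 P :=
    (memLp_two_iff_integrable_sq_norm (hv_meas.mono hm).aestronglyMeasurable).2 hgrad
  have hgX : MemLp (fun ω => g (X ω)) 2 P := by
    have hbias_memLp : MemLp (fun ω => g (X ω) - gradient F (X ω)) 2 P :=
      MemLp.of_bound ((hgX_meas.mono hm).sub (hv_meas.mono hm)).aestronglyMeasurable √δ
        (ae_of_all _ fun ω => Real.le_sqrt_of_sq_le (hbias (X ω)))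
    simpa [Pi.add_def] using hv.add hbias_memLp
  have hgap_int : Integrable (fun ω => F (X ω) - F xstar) P := hFX.sub (integrable_const _)
  calc ∫ ω, F (X ω - α • G ω) ∂P - F xstar
      ≤ ∫ ω, (F (X ω) - α * ⟪gradient F (X ω), g (X ω)⟫_ℝ + α / 2 * ‖g (X ω)‖ ^ 2) ∂P
          - F xstar :=
        sub_le_sub_right (integral_comp_sub_smul_le_of_condExp hm hF hLip hL hX hgX_meas hFX hFY
          hv hgX hG hmean hvar hα hαL) _
    _ ≤ ∫ ω, ((1 - α * μ) * (F (X ω) - F xstar) + (F xstar + α / 2 * δ)) ∂P - F xstar := by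
        refine sub_le_sub_right (integral_mono (((hFX.sub ((hv.integrable_inner hgX).const_mul α)).add
          ((hgX.integrable_norm_pow two_ne_zero).const_mul _))) ((hgap_int.const_mul _).add
          (integrable_const _)) fun ω => ?_) _
        have hpl : μ * (F (X ω) - F xstar)
            ≤ ⟪gradient F (X ω), g (X ω)⟫_ℝ - ‖g (X ω)‖ ^ 2 / 2 + δ / 2 := by
          linarith [hsc (X ω), hbias (X ω), norm_sub_sq_real (g (X ω)) (gradient F (X ω)),
            real_inner_comm (gradient F (X ω)) (g (X ω))]
        simp only [Pi.add_apply, Pi.sub_apply]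
        linarith [mul_le_mul_of_nonneg_left hpl hα]
    _ = (1 - α * μ) * (∫ ω, F (X ω) ∂P - F xstar) + α / 2 * δ := by
        rw [integral_add (hgap_int.const_mul _) (integrable_const _), integral_const_mul,
          integral_sub hFX (integrable_const _)]
        simp only [integral_const, probReal_univ, one_smul]
        ring

end BiasedStep

theorem linear_convergence_FD_adaptive_sampling_general
    {d : ℕ} {Ω : Type*} {mΩ : MeasurableSpace Ω}
    (P : Measure Ω) [IsProbabilityMeasure P]
    (F : EuclideanSpace ℝ (Fin d) → ℝ) (L μ ν θ : ℝ)
    (hμ : 0 < μ) (hμL : μ ≤ L) (hν : 0 < ν)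
    (hF : Differentiable ℝ F)
    (hLip : ∀ x y, ‖gradient F x - gradient F y‖ ≤ L * ‖x - y‖)
    (xstar : EuclideanSpace ℝ (Fin d)) (hmin : ∀ y, F xstar ≤ F y)
    (hsc : ∀ y, 2 * μ * (F y - F xstar) ≤ ‖gradient F y‖ ^ 2)
    (ℱ : Filtration ℕ mΩ)
    (x G : ℕ → Ω → EuclideanSpace ℝ (Fin d))
    (hadapted : ∀ k, StronglyMeasurable[ℱ k] (x k))
    (hintF : ∀ k, Integrable (fun ω => F (x k ω)) P)
    (hintgrad : ∀ k, Integrable (fun ω => ‖gradient F (x k ω)‖ ^ 2) P)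
    (hintG : ∀ k, Integrable (fun ω => ‖G k ω‖ ^ 2) P)
    (hupdate : ∀ k ω, x (k + 1) ω = x k ω - (1 / (4 * (1 + θ ^ 2) * L)) • G k ω)
    (hcondmean : ∀ k, (P[G k | ℱ k]) =ᵐ[P] fun ω => fdGrad F ν (x k ω))
    (hcondvar : ∀ k, (P[(fun ω => ‖G k ω - fdGrad F ν (x k ω)‖ ^ 2) | ℱ k])
        ≤ᵐ[P] fun ω => θ ^ 2 * ‖fdGrad F ν (x k ω)‖ ^ 2) :
    ∀ k, ∫ ω, (F (x k ω) - F xstar) ∂P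
      ≤ (1 - μ / (8 * (1 + θ ^ 2) * L)) ^ k *
          ((∫ ω, F (x 0 ω) ∂P) - F xstar - 3 * L ^ 2 * ν ^ 2 * d / (8 * μ))
        + 3 * L ^ 2 * ν ^ 2 * d / (8 * μ) := by
  have hL : 0 < L := hμ.trans_le hμL
  set α := 1 / (4 * (1 + θ ^ 2) * L) with hα_def
  have hα : 0 < α := by positivity
  set δ := (d : ℝ) * (L * ν / 2) ^ 2 with hδ_def
  have hstep : ∀ k, ∫ ω, F (x (k + 1) ω) ∂P - F xstar
      ≤ (1 - α * μ) * (∫ ω, F (x k ω) ∂P - F xstar) + α / 2 * δ := fun k => by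
    have hG_eq : G k = fun ω => α⁻¹ • (x k ω - x (k + 1) ω) := by
      funext ω
      rw [hupdate k ω, sub_sub_cancel, smul_smul, inv_mul_cancel₀ hα.ne', one_smul]
    have hG_meas : AEStronglyMeasurable (G k) P := by
      rw [hG_eq]
      exact (((hadapted k).mono (ℱ.le k)).sub ((hadapted (k + 1)).mono (ℱ.le (k + 1)))
        |>.const_smul α⁻¹).aestronglyMeasurable
    simp_rw [hupdate k]
    refine integral_sub_le_of_biased_gradient_step (ℱ.le k) hF hLip hL.le hsc
      (continuous_fdGrad hF.continuous ν) (norm_fdGrad_sub_gradient_sq_le hF hLip hν.ne')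
      (hadapted k) (hintF k) ?_ (hintgrad k)
      ((memLp_two_iff_integrable_sq_norm hG_meas).2 (hintG k)) (hcondmean k) (hcondvar k)
      hα.le (by rw [hα_def]; field_simp; linarith)
    simpa only [hupdate k] using hintF (k + 1)
  have hgap : ∀ k, 0 ≤ ∫ ω, F (x k ω) ∂P - F xstar := fun k => by
    simpa using integral_mono (integrable_const _) (hintF k) fun ω => hmin (x k ω)
  set q := μ / (8 * (1 + θ ^ 2) * L) with hq_def
  set c := 3 * L ^ 2 * ν ^ 2 * d / (8 * μ) with hc_def
  have hq : q = α * μ / 2 := by rw [hq_def, hα_def]; field_simp; ring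
  have hqc : q * c = 3 / 4 * α * δ := by rw [hq_def, hc_def, hα_def, hδ_def]; field_simp; ring
  have hδ : 0 ≤ δ := by positivity
  have hrec : ∀ k, ∫ ω, F (x (k + 1) ω) ∂P - F xstar
      ≤ (1 - q) * (∫ ω, F (x k ω) ∂P - F xstar) + q * c := fun k => by
    rw [hqc, hq]
    nlinarith [hstep k, mul_nonneg (mul_nonneg hα.le hμ.le) (hgap k), mul_nonneg hα.le hδ]
  intro k
  rw [integral_sub (hintF k) (integrable_const _), integral_const, probReal_univ, one_smul]
  exact le_pow_mul_sub_add_of_le_mul_add (e := fun k => ∫ ω, F (x k ω) ∂P - F xstar)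
    ((div_le_one (by positivity)).2 (by nlinarith [sq_nonneg θ])) hrec k

/-- (Linear convergence of adaptive-sampling FD method.) Let `F` have
`L`-Lipschitz gradient and be `μ`-strongly convex (PL sense) with minimizer `x*`,
`0 < μ ≤ L`, `ν, θ > 0`. Suppose the iterates satisfy
`x_{k+1} = x_k − α G_k` with `α = 1/(4(1+θ²)L)`, where
`E[G_k | 𝓕_k] = ∇^{FD}F(x_k)` and
`E[‖G_k − ∇^{FD}F(x_k)‖² | 𝓕_k] ≤ θ² ‖∇^{FD}F(x_k)‖²` a.s. Then for every `k`,
`E[F(x_k) − F(x*)] ≤ (1 − Ω₃)^k (E[F(x₀)] − F(x*) − Ω₄) + Ω₄`, where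
`Ω₃ = μ/(8(1+θ²)L)` and `Ω₄ = 3L²ν²d/(8μ)`. -/
theorem linear_convergence_FD_adaptive_sampling
    {d : ℕ} {Ω : Type*} {mΩ : MeasurableSpace Ω}
    (P : Measure Ω) [IsProbabilityMeasure P]
    (F : EuclideanSpace ℝ (Fin d) → ℝ) (L μ ν θ : ℝ)
    (hμ : 0 < μ) (hμL : μ ≤ L) (hν : 0 < ν) (hθ : 0 < θ)
    (hF : Differentiable ℝ F)
    (hLip : ∀ x y, ‖gradient F x - gradient F y‖ ≤ L * ‖x - y‖)
    (xstar : EuclideanSpace ℝ (Fin d)) (hmin : ∀ y, F xstar ≤ F y)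
    (hsc : ∀ y, 2 * μ * (F y - F xstar) ≤ ‖gradient F y‖ ^ 2)
    (ℱ : Filtration ℕ mΩ)
    (x G : ℕ → Ω → EuclideanSpace ℝ (Fin d))
    (hadapted : ∀ k, StronglyMeasurable[ℱ k] (x k))
    (hintF : ∀ k, Integrable (fun ω => F (x k ω)) P)
    (hintgrad : ∀ k, Integrable (fun ω => ‖gradient F (x k ω)‖ ^ 2) P)
    (hintG : ∀ k, Integrable (fun ω => ‖G k ω‖ ^ 2) P)
    (hupdate : ∀ k ω, x (k + 1) ω = x k ω - (1 / (4 * (1 + θ ^ 2) * L)) • G k ω)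
    (hcondmean : ∀ k, (P[G k | ℱ k]) =ᵐ[P] fun ω => fdGrad F ν (x k ω))
    (hcondvar : ∀ k, (P[(fun ω => ‖G k ω - fdGrad F ν (x k ω)‖ ^ 2) | ℱ k])
        ≤ᵐ[P] fun ω => θ ^ 2 * ‖fdGrad F ν (x k ω)‖ ^ 2) :
    ∀ k, ∫ ω, (F (x k ω) - F xstar) ∂P
      ≤ (1 - μ / (8 * (1 + θ ^ 2) * L)) ^ k *
          ((∫ ω, F (x 0 ω) ∂P) - F xstar - 3 * L ^ 2 * ν ^ 2 * d / (8 * μ))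
        + 3 * L ^ 2 * ν ^ 2 * d / (8 * μ) :=
  linear_convergence_FD_adaptive_sampling_general P F L μ ν θ hμ hμL hν hF hLip xstar hmin hsc ℱ x G
    hadapted hintF hintgrad hintG hupdate hcondmean hcondvar
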